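/- arXiv:1809.10662 — 2 statements merged into one kernel-verified Lean document; each statement's English description precedes it below -/
import Mathlib

section
/- If E ∈ C_10, then any quotient sheaf E' of E in Coh(X) lies in the extension closure ⟨C_00, C_10⟩. -/
/-!
A framework for torsion theory computations on elliptic threefolds
(following Angeles–Lo–van der Linden).

We axiomatize the setting of a Weierstraß elliptic threefold `π : X → B`:
`𝒜` plays the role of the abelian category `Coh(X)`, `D` plays the role of
the bounded derived category `D^b(Coh(X))` (a category with a shift by `ℤ`),
`ι : 𝒜 ⥤ D` is the canonical embedding, `Φ, Φhat` are the relative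
Fourier–Mukai autoequivalences, `dim E` is the dimension of `supp E`,
`fdim E` is the dimension of `π(supp E)`, `hat` is the Fourier–Mukai
transform of a WIT sheaf, `C20` is the class of pure 1-dimensional sheaves
with horizontal support, and `ch` is the Chern character (as a 2 × 3 integer
matrix, for the product threefold `X = C × B`).

The paper's `Properties' (D0–D3, Z1–Z2, A1–A4, TC1–TC3, C0–C1, CH0p–CH3p,
A4p) are encoded in the axiom structures `EllipticAxioms` (general
Weierstraß threefolds) and `ProductAxioms` (the product of an elliptic
curve and a K3 surface of Picard rank one).
-/

open CategoryTheory CategoryTheory.Limits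

universe v v' u u'

namespace EllipticFramework

variable {𝒜 : Type u} [Category.{v} 𝒜] [Abelian 𝒜]

/-- `(f, g)` form a short exact sequence `0 → A → B → C → 0`. -/
def IsShortExact {A B C : 𝒜} (f : A ⟶ B) (g : B ⟶ C) : Prop :=
  ∃ w : f ≫ g = 0, (ShortComplex.mk f g w).ShortExact

/-- `E'` is a quotient of `E` (in the abelian category). -/
def IsQuotient (E E' : 𝒜) : Prop := ∃ f : E ⟶ E', Epi f

/-- The extension closure `⟨T⟩` of a class of objects `T`: the smallest class of
objects containing `T` and the zero objects and closed under extensions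
(hence the object class of the smallest extension-closed full subcategory
containing `T`). -/
inductive ExtClosure (T : Set 𝒜) : 𝒜 → Prop
  | of {E : 𝒜} (hE : E ∈ T) : ExtClosure T E
  | zero {E : 𝒜} (hE : IsZero E) : ExtClosure T E
  | ext {A B C : 𝒜} (f : A ⟶ B) (g : B ⟶ C) (hfg : IsShortExact f g)
      (hA : ExtClosure T A) (hC : ExtClosure T C) : ExtClosure T B

/-- `Hom(T, F) = 0`. -/
def HomOrth (T F : Set 𝒜) : Prop :=
  ∀ ⦃A : 𝒜⦄, A ∈ T → ∀ ⦃B : 𝒜⦄, B ∈ F → ∀ f : A ⟶ B, f = 0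

/-- `(T, F)` is a torsion pair: `Hom(T, F) = 0` and every object `E` fits in a
short exact sequence `0 → A → E → C → 0` with `A ∈ T` and `C ∈ F`. -/
def IsTorsionPair (T F : Set 𝒜) : Prop :=
  HomOrth T F ∧
    ∀ E : 𝒜, ∃ (A C : 𝒜) (f : A ⟶ E) (g : E ⟶ C),
      A ∈ T ∧ C ∈ F ∧ IsShortExact f g

/-- `T` is a torsion class, i.e. the first member of some torsion pair. -/
def IsTorsionClass (T : Set 𝒜) : Prop := ∃ F : Set 𝒜, IsTorsionPair T F

/-- `(T, F)` is a torsion pair in the full (Serre, hence abelian) subcategory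
whose objects are the class `𝒮`. -/
def IsTorsionPairIn (𝒮 T F : Set 𝒜) : Prop :=
  T ⊆ 𝒮 ∧ F ⊆ 𝒮 ∧ HomOrth T F ∧
    ∀ E ∈ 𝒮, ∃ (A C : 𝒜) (f : A ⟶ E) (g : E ⟶ C),
      A ∈ T ∧ C ∈ F ∧ IsShortExact f g

/-- `T` is a torsion class in the full subcategory with object class `𝒮`. -/
def IsTorsionClassIn (𝒮 T : Set 𝒜) : Prop := ∃ F : Set 𝒜, IsTorsionPairIn 𝒮 T F

/-- `T` is (the object class of) a Serre subcategory: for every short exact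
sequence `0 → A → B → C → 0`, `B ∈ T` iff both `A ∈ T` and `C ∈ T`. -/
def IsSerre (T : Set 𝒜) : Prop :=
  ∀ {A B C : 𝒜} (f : A ⟶ B) (g : B ⟶ C), IsShortExact f g →
    (B ∈ T ↔ A ∈ T ∧ C ∈ T)

/-- The data of the elliptic-threefold framework. -/
structure EllipticData (𝒜 : Type u) (D : Type u') [Category.{v} 𝒜] [Abelian 𝒜]
    [Category.{v'} D] [HasShift D ℤ] where
  /-- the embedding `Coh(X) → D^b(Coh(X))` -/
  ι : 𝒜 ⥤ D
  /-- the relative Fourier–Mukai transform `Φ` -/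
  Φ : D ⥤ D
  /-- the relative Fourier–Mukai transform `Φ̂` -/
  Φhat : D ⥤ D
  /-- `dim E = dim supp(E)` -/
  dim : 𝒜 → ℕ
  /-- `fdim E = dim π(supp(E))` -/
  fdim : 𝒜 → ℕ
  /-- the transform `Ê` of a WIT sheaf `E` -/
  hat : 𝒜 → 𝒜
  /-- `C20 = 𝒜_h^{≤1}`: pure 1-dimensional sheaves all of whose 1-dimensional
  irreducible components of support meet every fiber of `π` in finitely many
  points -/
  C20 : Set 𝒜
  /-- the Chern character as a `2 × 3` integer matrix (product threefold case) -/
  ch : D → Fin 2 → Fin 3 → ℤ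

namespace EllipticData

variable {D : Type u'} [Category.{v'} D] [HasShift D ℤ]
variable (S : EllipticData 𝒜 D)

/-- `E` is `Φ`-WIT_i : `Φ(E) ≅ F[-i]` for some sheaf `F`.  `W_{i,Φ}`. -/
def WIT (i : ℤ) : Set 𝒜 :=
  {E | ∃ F : 𝒜, Nonempty (S.Φ.obj (S.ι.obj E) ≅ (S.ι.obj F)⟦(-i)⟧)}

/-- `E` is `Φ̂`-WIT_i.  `W_{i,Φ̂}`. -/
def WIThat (i : ℤ) : Set 𝒜 :=
  {E | ∃ F : 𝒜, Nonempty (S.Φhat.obj (S.ι.obj E) ≅ (S.ι.obj F)⟦(-i)⟧)}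

/-- `𝒜_X^{≤ d}`, sheaves of dimension at most `d`. -/
def Adim (d : ℕ) : Set 𝒜 := {E | S.dim E ≤ d}

/-- `𝒜(π)_{≤ e}`, sheaves with `dim π(supp E) ≤ e`;  `Afib 0 = 𝒜(π)_0`. -/
def Afib (e : ℕ) : Set 𝒜 := {E | S.fdim E ≤ e}

/-- `𝒜^d(π)_e = {E : dim E = d, dim π(supp E) = e}`. -/
def Ade (d e : ℕ) : Set 𝒜 := {E | S.dim E = d ∧ S.fdim E = e}

/-- `C_00 = 𝒜_X^{≤0}`. -/
def C00 : Set 𝒜 := S.Adim 0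

/-- `C_10 = {E ∈ 𝒜(π)_0 ∩ W_{0,Φ} : Hom(C_00, E) = 0}`. -/
def C10 : Set 𝒜 :=
  {E | E ∈ S.Afib 0 ∧ E ∈ S.WIT 0 ∧ ∀ A ∈ S.C00, ∀ f : A ⟶ E, f = 0}

/-- `C_11 = {E ∈ 𝒜(π)_0 ∩ W_{1,Φ} : dim Ê = 0}`. -/
def C11 : Set 𝒜 :=
  {E | E ∈ S.Afib 0 ∧ E ∈ S.WIT 1 ∧ S.dim (S.hat E) = 0}

/-- `C_12 = {E ∈ 𝒜(π)_0 ∩ W_{1,Φ} : dim Ê = 1, Hom(C_11, E) = 0}`. -/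
def C12 : Set 𝒜 :=
  {E | E ∈ S.Afib 0 ∧ E ∈ S.WIT 1 ∧ S.dim (S.hat E) = 1 ∧
    ∀ A ∈ S.C11, ∀ f : A ⟶ E, f = 0}

/-- `C_30 = 𝒜^2(π)_1 ∩ W_{0,Φ}`. -/
def C30 : Set 𝒜 := {E | E ∈ S.Ade 2 1 ∧ E ∈ S.WIT 0}

/-- `C_31 = {E ∈ Φ(C_20) : dim E = 2}` (every sheaf in `C_20` is `Φ`-WIT_0). -/
def C31 : Set 𝒜 := {E | S.dim E = 2 ∧ ∃ F ∈ S.C20, Nonempty (S.hat F ≅ E)}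

/-- `C_32 = {E ∈ 𝒜^2(π)_1 ∩ W_{1,Φ} : dim Ê = 2}`. -/
def C32 : Set 𝒜 := {E | E ∈ S.Ade 2 1 ∧ E ∈ S.WIT 1 ∧ S.dim (S.hat E) = 2}

/-- `C_40 = {E ∈ 𝒜^2(π)_2 ∩ W_{0,Φ} : dim Ê = 3}`. -/
def C40 : Set 𝒜 := {E | E ∈ S.Ade 2 2 ∧ E ∈ S.WIT 0 ∧ S.dim (S.hat E) = 3}

/-- `C_50 = 𝒜^3(π)_2 ∩ W_{0,Φ}`. -/
def C50 : Set 𝒜 := {E | E ∈ S.Ade 3 2 ∧ E ∈ S.WIT 0}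

/-- `C_51 = {E ∈ 𝒜^3(π)_2 ∩ W_{1,Φ} : dim Ê = 2}`. -/
def C51 : Set 𝒜 := {E | E ∈ S.Ade 3 2 ∧ E ∈ S.WIT 1 ∧ S.dim (S.hat E) = 2}

/-- `C_52 = {E ∈ 𝒜^3(π)_2 ∩ W_{1,Φ} : dim Ê = 3}`. -/
def C52 : Set 𝒜 := {E | E ∈ S.Ade 3 2 ∧ E ∈ S.WIT 1 ∧ S.dim (S.hat E) = 3}

/-- `𝒯_00 = ⟨C_00⟩`. -/
def T00 : Set 𝒜 := ExtClosure S.C00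
/-- `𝒯_10 = ⟨C_00, C_10⟩`. -/
def T10 : Set 𝒜 := ExtClosure (S.C00 ∪ S.C10)
/-- `𝒯_11 = ⟨𝒯_10, C_11⟩`. -/
def T11 : Set 𝒜 := ExtClosure (S.C00 ∪ S.C10 ∪ S.C11)
/-- `𝒯_12 = ⟨𝒯_11, C_12⟩`. -/
def T12 : Set 𝒜 := ExtClosure (S.C00 ∪ S.C10 ∪ S.C11 ∪ S.C12)
/-- `𝒯_20 = ⟨C_ij : i ≤ 2⟩`. -/
def T20 : Set 𝒜 := ExtClosure (S.C00 ∪ S.C10 ∪ S.C11 ∪ S.C12 ∪ S.C20)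
/-- `𝒯_30 = ⟨𝒯_20, C_30⟩`. -/
def T30 : Set 𝒜 := ExtClosure (S.C00 ∪ S.C10 ∪ S.C11 ∪ S.C12 ∪ S.C20 ∪ S.C30)
/-- `𝒯_31 = ⟨𝒯_30, C_31⟩`. -/
def T31 : Set 𝒜 :=
  ExtClosure (S.C00 ∪ S.C10 ∪ S.C11 ∪ S.C12 ∪ S.C20 ∪ S.C30 ∪ S.C31)
/-- `𝒯_32 = ⟨𝒯_31, C_32⟩`. -/
def T32 : Set 𝒜 :=
  ExtClosure (S.C00 ∪ S.C10 ∪ S.C11 ∪ S.C12 ∪ S.C20 ∪ S.C30 ∪ S.C31 ∪ S.C32)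
/-- `𝒯_40 = ⟨C_ij : i ≤ 4⟩`. -/
def T40 : Set 𝒜 :=
  ExtClosure (S.C00 ∪ S.C10 ∪ S.C11 ∪ S.C12 ∪ S.C20 ∪ S.C30 ∪ S.C31 ∪ S.C32 ∪ S.C40)
/-- `𝒯_50 = ⟨𝒯_40, C_50⟩`. -/
def T50 : Set 𝒜 :=
  ExtClosure (S.C00 ∪ S.C10 ∪ S.C11 ∪ S.C12 ∪ S.C20 ∪ S.C30 ∪ S.C31 ∪ S.C32 ∪ S.C40 ∪ S.C50)
/-- `𝒯_51 = ⟨𝒯_50, C_51⟩`. -/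
def T51 : Set 𝒜 :=
  ExtClosure (S.C00 ∪ S.C10 ∪ S.C11 ∪ S.C12 ∪ S.C20 ∪ S.C30 ∪ S.C31 ∪ S.C32 ∪ S.C40 ∪ S.C50 ∪ S.C51)
/-- `𝒯_52 = ⟨𝒯_51, C_52⟩`. -/
def T52 : Set 𝒜 :=
  ExtClosure (S.C00 ∪ S.C10 ∪ S.C11 ∪ S.C12 ∪ S.C20 ∪ S.C30 ∪ S.C31 ∪ S.C32 ∪ S.C40 ∪ S.C50 ∪ S.C51 ∪ S.C52)
/-- `ℱ_2 = ⟨C_00, C_10, C_20⟩`. -/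
def F2 : Set 𝒜 := ExtClosure (S.C00 ∪ S.C10 ∪ S.C20)
/-- `ℱ_3 = ⟨C_00, C_10, C_20, C_30⟩`. -/
def F3 : Set 𝒜 := ExtClosure (S.C00 ∪ S.C10 ∪ S.C20 ∪ S.C30)
/-- `ℱ_4 = ⟨C_00, …, C_40⟩`. -/
def F4 : Set 𝒜 := ExtClosure (S.C00 ∪ S.C10 ∪ S.C20 ∪ S.C30 ∪ S.C40)
/-- `ℱ_5 = ⟨C_00, …, C_50⟩`. -/
def F5 : Set 𝒜 := ExtClosure (S.C00 ∪ S.C10 ∪ S.C20 ∪ S.C30 ∪ S.C40 ∪ S.C50)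

end EllipticData

/-- The axioms (`Properties') of a Weierstraß elliptic threefold `π : X → B`,
following Angeles–Lo–van der Linden, Section 3. -/
structure EllipticAxioms {D : Type u'} [Category.{v'} D] [HasShift D ℤ]
    (S : EllipticData 𝒜 D) : Prop where
  /-- `Coh(X)` is noetherian. -/
  noetherian : ∀ E : 𝒜, WellFoundedGT (Subobject E)
  /-- `X` is a threefold. -/
  dim_le_three : ∀ E : 𝒜, S.dim E ≤ 3
  /-- `B` is a surface. -/
  fdim_le_two : ∀ E : 𝒜, S.fdim E ≤ 2
  /-- Property D2 (first part): `dim π(supp E) ≤ dim E`. -/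
  fdim_le_dim : ∀ E : 𝒜, S.fdim E ≤ S.dim E
  /-- Property D2 (second part; `π` is flat of relative dimension 1). -/
  dim_le_fdim_add_one : ∀ E : 𝒜, S.dim E ≤ S.fdim E + 1
  /-- Property D1: `dim B = max (dim A) (dim C)` in a short exact sequence. -/
  dim_ses : ∀ {A B C : 𝒜} (f : A ⟶ B) (g : B ⟶ C),
    IsShortExact f g → S.dim B = max (S.dim A) (S.dim C)
  /-- Property D3: the analogue of D1 for `dim π(supp -)`. -/
  fdim_ses : ∀ {A B C : 𝒜} (f : A ⟶ B) (g : B ⟶ C),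
    IsShortExact f g → S.fdim B = max (S.fdim A) (S.fdim C)
  /-- Property A2: `Φ̂ ∘ Φ ≅ id[-1]`. -/
  comp₁ : Nonempty (S.Φ ⋙ S.Φhat ≅ shiftFunctor D (-1 : ℤ))
  /-- Property A2: `Φ ∘ Φ̂ ≅ id[-1]`. -/
  comp₂ : Nonempty (S.Φhat ⋙ S.Φ ≅ shiftFunctor D (-1 : ℤ))
  /-- `hat E` is a transform of the `Φ`-WIT_i sheaf `E`. -/
  hat_spec : ∀ (i : ℤ), ∀ E ∈ S.WIT i,
    Nonempty (S.Φ.obj (S.ι.obj E) ≅ (S.ι.obj (S.hat E))⟦(-i)⟧)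
  /-- Property A3: `dim π(supp E) = dim π(supp ΦE)`. -/
  a3 : ∀ (E F : 𝒜) (i : ℤ),
    Nonempty (S.Φ.obj (S.ι.obj E) ≅ (S.ι.obj F)⟦(-i)⟧) → S.fdim F = S.fdim E
  /-- Property TC1: each `𝒜_X^{≤ d}` is a Serre subcategory. -/
  tc1 : ∀ d : ℕ, IsSerre (S.Adim d)
  /-- Property TC2: each `𝒜(π)_{≤ e}` is a Serre subcategory. -/
  tc2 : ∀ e : ℕ, IsSerre (S.Afib e)
  /-- Property TC3: `(W_{0,Φ}, W_{1,Φ})` is a torsion pair in `Coh(X)`. -/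
  tc3 : IsTorsionPair (S.WIT 0) (S.WIT 1)
  /-- Property C0: `C_00 ⊆ W_{0,Φ}`. -/
  c0 : S.C00 ⊆ S.WIT 0
  /-- Property C1: `C_20 ⊆ W_{0,Φ}`. -/
  c1 : S.C20 ⊆ S.WIT 0
  /-- Sheaves in `C_20` are 1-dimensional with 1-dimensional image under `π`. -/
  c20_dim : ∀ E ∈ S.C20, S.dim E = 1 ∧ S.fdim E = 1
  /-- Properties Z1, Z2, D1: a 1-dimensional quotient of a horizontal sheaf is
  horizontal. -/
  c20_quot : ∀ E ∈ S.C20, ∀ E' : 𝒜, IsQuotient E E' → S.dim E' = 1 → E' ∈ S.C20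
  /-- Properties Z1, Z2: every sheaf of dimension ≤ 1 is an extension of a
  fiber sheaf by a sheaf in `C_00 ∪ C_20`. -/
  hv_decomp : ∀ E ∈ S.Adim 1, ∃ (Eh Ev : 𝒜) (f : Eh ⟶ E) (g : E ⟶ Ev),
    IsShortExact f g ∧ Eh ∈ S.C00 ∪ S.C20 ∧ Ev ∈ S.Afib 0

/-- The extra axioms available when `X = C × B` is the product of a smooth
elliptic curve `C` and a K3 surface `B` of Picard rank one, with `π` the
second projection (Properties CH1p, CH2p, CH3p, A4p). -/
structure ProductAxioms {D : Type u'} [Category.{v'} D] [HasShift D ℤ]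
    (S : EllipticData 𝒜 D) : Prop where
  /-- Property CH1p: `codim E = min {i + j : α_ij ≠ 0}` for a nonzero sheaf. -/
  ch1p : ∀ E : 𝒜, ¬ IsZero E →
    3 - S.dim E =
      sInf {n : ℕ | ∃ (i : Fin 2) (j : Fin 3),
        (i : ℕ) + (j : ℕ) = n ∧ S.ch (S.ι.obj E) i j ≠ 0}
  /-- Property CH2p: `dim π(supp E) = max {2 - j : α_1j ≠ 0}`. -/
  ch2p : ∀ E : 𝒜, ¬ IsZero E →
    S.fdim E = sSup {n : ℕ | ∃ j : Fin 3, 2 - (j : ℕ) = n ∧ S.ch (S.ι.obj E) 1 j ≠ 0}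
  /-- Property CH3p: `∑_{i+j = codim E} α_ij > 0` for a nonzero sheaf. -/
  ch3p : ∀ E : 𝒜, ¬ IsZero E →
    0 < ∑ i : Fin 2, ∑ j : Fin 3,
      (if (i : ℕ) + (j : ℕ) = 3 - S.dim E then S.ch (S.ι.obj E) i j else 0)
  /-- Property A4p: `ch(ΦE)` is obtained from `ch(E)` by a signed row swap. -/
  a4p_phi : ∀ Z : D,
    (∀ j : Fin 3, S.ch (S.Φ.obj Z) 0 j = S.ch Z 1 j) ∧
    (∀ j : Fin 3, S.ch (S.Φ.obj Z) 1 j = - S.ch Z 0 j)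
  /-- Property A4p: `ch(E[1]) = - ch(E)`. -/
  a4p_shift : ∀ Z : D, ∀ (i : Fin 2) (j : Fin 3),
    S.ch (Z⟦(1 : ℤ)⟧) i j = - S.ch Z i j

end EllipticFramework

/-!
Noetherian induction on quotients of `E`. If a quotient `F` admits no nonzero map from a
0-dimensional sheaf, it is again in `C_10`, since `𝒜(π)_0` and the torsion class `W_{0,Φ}` are
closed under quotients. Otherwise the image `I` of a nonzero map from a 0-dimensional sheaf lies
in `C_00`, and `F / I` is a quotient of `E` with strictly larger kernel, so it lies in
`⟨C_00, C_10⟩` by induction; hence so does the extension `F` of `F / I` by `I`.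
-/

namespace EllipticFramework

variable {𝒜 : Type u} [Category.{v} 𝒜] [Abelian 𝒜]

lemma isShortExact_kernel_ι {A B : 𝒜} (p : A ⟶ B) [Epi p] :
    IsShortExact (kernel.ι p) p :=
  ⟨kernel.condition p,
    { exact := ShortComplex.exact_of_f_is_kernel _ (kernelIsKernel p) }⟩

lemma isShortExact_cokernel_π {A B : 𝒜} (m : A ⟶ B) [Mono m] :
    IsShortExact m (cokernel.π m) :=
  ⟨cokernel.condition m,
    { exact := ShortComplex.exact_of_g_is_cokernel _ (cokernelIsCokernel m) }⟩

lemma IsSerre.mem_of_epi {T : Set 𝒜} (hT : IsSerre T) {A B : 𝒜} (p : A ⟶ B) [Epi p]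
    (hA : A ∈ T) : B ∈ T :=
  ((hT _ _ (isShortExact_kernel_ι p)).1 hA).2

lemma IsTorsionPair.exists_iso_of_epi {T F : Set 𝒜} (h : IsTorsionPair T F) {A B : 𝒜}
    (p : A ⟶ B) [Epi p] (hA : A ∈ T) : ∃ B' ∈ T, Nonempty (B' ≅ B) := by
  obtain ⟨hTF, hdecomp⟩ := h
  obtain ⟨B', C, f, g, hB', hC, _, hfg⟩ := hdecomp B
  have hg : g = 0 := (cancel_epi p).1 (by rw [hTF hA hC (p ≫ g), comp_zero])
  have : Epi f := hfg.exact.epi_f hg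
  have : Mono f := hfg.mono_f
  have : IsIso f := isIso_of_mono_of_epi f
  exact ⟨B', hB', ⟨asIso f⟩⟩

lemma kernelSubobject_lt_kernelSubobject_comp_cokernel_π {E F I : 𝒜} (p : E ⟶ F) [Epi p]
    (m : I ⟶ F) [Mono m] (hI : ¬ IsZero I) :
    kernelSubobject p < kernelSubobject (p ≫ cokernel.π m) := by
  refine lt_of_le_of_ne (kernelSubobject_comp_le p _) fun heq => hI ?_
  have hker : kernel.ι (p ≫ cokernel.π m) ≫ p = 0 := by
    rw [← kernelSubobject_arrow', Category.assoc, ← Subobject.ofLE_arrow heq.ge,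
      Category.assoc, kernelSubobject_arrow_comp, comp_zero, comp_zero]
  -- `p` factors through `p ≫ cokernel.π m`, so `cokernel.π m` is a split mono and `m = 0`.
  have hsplit : cokernel.π m ≫ Abelian.epiDesc _ p hker = 𝟙 F :=
    (cancel_epi p).1 (by rw [← Category.assoc, Abelian.comp_epiDesc, Category.comp_id])
  have : Mono (cokernel.π m) := mono_of_mono_fac hsplit
  exact IsZero.of_mono_eq_zero m ((cancel_mono (cokernel.π m)).1 (by simp))

theorem quotient_induction {E : 𝒜} [WellFoundedGT (Subobject E)] {P : 𝒜 → Prop}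
    (step : ∀ (F : 𝒜) (p : E ⟶ F) [Epi p],
      (∀ (F' : 𝒜) (p' : E ⟶ F') [Epi p'], kernelSubobject p < kernelSubobject p' → P F') →
        P F)
    {F : 𝒜} (p : E ⟶ F) [Epi p] : P F := by
  suffices H : ∀ K : Subobject E, ∀ (F : 𝒜) (p : E ⟶ F) [Epi p], kernelSubobject p = K → P F from
    H _ F p rfl
  intro K
  induction K using WellFoundedGT.induction with
  | ind K IH =>
    rintro F p _ rfl
    exact step F p fun F' p' _ hlt => IH _ hlt F' p' rfl

theorem extClosure_of_epi {Z T : Set 𝒜} {E : 𝒜} [WellFoundedGT (Subobject E)]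
    (hZ : ∀ {A B : 𝒜} (p : A ⟶ B) [Epi p], A ∈ Z → B ∈ Z)
    (hT : ∀ {F : 𝒜} (p : E ⟶ F) [Epi p], (∀ A ∈ Z, ∀ f : A ⟶ F, f = 0) → F ∈ T)
    {F : 𝒜} (p : E ⟶ F) [Epi p] : ExtClosure (Z ∪ T) F := by
  refine quotient_induction (fun F p _ IH => ?_) p
  by_cases hF : ∀ A ∈ Z, ∀ f : A ⟶ F, f = 0
  · exact .of (.inr (hT p hF))
  push Not at hF
  obtain ⟨A, hA, f, hf⟩ := hF
  have hIZ : image f ∈ Z := hZ (factorThruImage f) hA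
  have hI : ¬ IsZero (image f) := fun hz => hf (by
    rw [← image.fac f, hz.eq_of_src (image.ι f) 0, comp_zero])
  exact .ext _ _ (isShortExact_cokernel_π (image.ι f)) (.of (.inl hIZ))
    (IH _ (p ≫ cokernel.π (image.ι f))
      (kernelSubobject_lt_kernelSubobject_comp_cokernel_π p _ hI))

namespace EllipticData

variable {D : Type u'} [Category.{v'} D] [HasShift D ℤ] {S : EllipticData 𝒜 D}

lemma mem_WIT_of_iso {i : ℤ} {A B : 𝒜} (e : A ≅ B) (hA : A ∈ S.WIT i) : B ∈ S.WIT i := by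
  obtain ⟨F, ⟨φ⟩⟩ := hA
  exact ⟨F, ⟨S.Φ.mapIso (S.ι.mapIso e.symm) ≪≫ φ⟩⟩

lemma mem_C10_of_epi (hS : EllipticAxioms S) {E F : 𝒜} (p : E ⟶ F) [Epi p]
    (hfib : E ∈ S.Afib 0) (hwit : E ∈ S.WIT 0) (hF : ∀ A ∈ S.C00, ∀ f : A ⟶ F, f = 0) :
    F ∈ S.C10 := by
  obtain ⟨F', hF', ⟨e⟩⟩ := hS.tc3.exists_iso_of_epi p hwit
  exact ⟨IsSerre.mem_of_epi (hS.tc2 0) p hfib, mem_WIT_of_iso e hF', hF⟩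

end EllipticData

/-- Lemma 4.5.  If `E ∈ C_10`, then any quotient sheaf `E'`
of `E` in `Coh(X)` lies in the extension closure `⟨C_00, C_10⟩`. -/
theorem quotient_of_C10 {𝒜 : Type u} {D : Type u'} [Category.{v} 𝒜] [Abelian 𝒜]
    [Category.{v'} D] [HasShift D ℤ] (S : EllipticData 𝒜 D)
    (hS : EllipticAxioms S) (E : 𝒜) (hE : E ∈ S.C10) (E' : 𝒜)
    (hq : IsQuotient E E') :
    ExtClosure (S.C00 ∪ S.C10) E' := by
  obtain ⟨hfib, hwit, -⟩ := hE
  obtain ⟨q, _⟩ := hq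
  have := hS.noetherian E
  exact extClosure_of_epi (fun p _ hA => IsSerre.mem_of_epi (hS.tc1 0) p hA)
    (fun p _ hF => EllipticData.mem_C10_of_epi hS p hfib hwit hF) q

end EllipticFramework
end

section
/- Let T and C be full subcategories of Coh(X), with T a torsion class in Coh(X). Suppose that for every A ∈ C and every quotient A ↠ A' in Coh(X), the quotient A' lies in the extension closure ⟨T, C⟩. Then ⟨T, C⟩ is a torsion class in Coh(X). -/
/-!
A framework for torsion theory computations on elliptic threefolds
(following Angeles–Lo–van der Linden).

We axiomatize the setting of a Weierstraß elliptic threefold `π : X → B`: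
`𝒜` plays the role of the abelian category `Coh(X)`, `D` plays the role of
the bounded derived category `D^b(Coh(X))` (a category with a shift by `ℤ`),
`ι : 𝒜 ⥤ D` is the canonical embedding, `Φ, Φhat` are the relative
Fourier–Mukai autoequivalences, `dim E` is the dimension of `supp E`,
`fdim E` is the dimension of `π(supp E)`, `hat` is the Fourier–Mukai
transform of a WIT sheaf, `C20` is the class of pure 1-dimensional sheaves
with horizontal support, and `ch` is the Chern character (as a 2 × 3 integer
matrix, for the product threefold `X = C × B`).

The paper's `Properties' (D0–D3, Z1–Z2, A1–A4, TC1–TC3, C0–C1, CH0p–CH3p,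
A4p) are encoded in the axiom structures `EllipticAxioms` (general
Weierstraß threefolds) and `ProductAxioms` (the product of an elliptic
curve and a K3 surface of Picard rank one).
-/

open CategoryTheory CategoryTheory.Limits

universe v v' u u'

namespace EllipticFramework

/-!
Closure under quotients passes from `T ∪ C` to `⟨T, C⟩` by induction, because a quotient of an
extension is an extension of quotients; quotients of objects of `T` stay in `⟨T⟩` since `T` is a
torsion class. In a noetherian abelian category, a class closed under quotients and extensions
is a torsion class: the torsion part of `E` is a maximal subobject of `E` in the class.
-/

variable {𝒜 : Type u} [Category.{v} 𝒜] [Abelian 𝒜]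

lemma shortExact_kernel_of_epi {X Y : 𝒜} (g : X ⟶ Y) [Epi g] :
    (ShortComplex.mk (kernel.ι g) g (kernel.condition g)).ShortExact :=
  .mk' (ShortComplex.exact_kernel g) inferInstance inferInstance

lemma shortExact_cokernel_of_mono {X Y : 𝒜} (f : X ⟶ Y) [Mono f] :
    (ShortComplex.mk f (cokernel.π f) (cokernel.condition f)).ShortExact :=
  .mk' (ShortComplex.exact_cokernel f) inferInstance inferInstance

/-- An epimorphic image `B'` of an extension of `C` by `A` is an extension of a quotient of `C`
by a quotient of `A`, namely of `coker (f ≫ e)` by `im (f ≫ e)`. -/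
lemma IsShortExact.exists_of_epi {A B C B' : 𝒜} {f : A ⟶ B} {g : B ⟶ C}
    (hfg : IsShortExact f g) (e : B ⟶ B') [Epi e] :
    ∃ (A' C' : 𝒜) (f' : A' ⟶ B') (g' : B' ⟶ C'),
      IsShortExact f' g' ∧ IsQuotient A A' ∧ IsQuotient C C' := by
  obtain ⟨w, hSE⟩ := hfg
  have : Epi g := hSE.epi_g
  obtain ⟨u, hu⟩ := hSE.exact.desc' (e ≫ cokernel.π (f ≫ e))
    (by rw [← Category.assoc, cokernel.condition])
  have : Epi (g ≫ u) := hu ▸ epi_comp _ _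
  have : Epi u := epi_of_epi g u
  exact ⟨_, _, Abelian.image.ι (f ≫ e), cokernel.π (f ≫ e),
    ⟨_, shortExact_kernel_of_epi (cokernel.π (f ≫ e))⟩,
    ⟨Abelian.factorThruImage (f ≫ e), inferInstance⟩, ⟨u, inferInstance⟩⟩

namespace ExtClosure

lemma mono {S S' : Set 𝒜} (h : S ⊆ S') : ExtClosure S ≤ ExtClosure S' := by
  intro E hE
  induction hE with
  | of hE => exact .of (h hE)
  | zero hE => exact .zero hE
  | ext f g hfg _ _ ihA ihC => exact .ext f g hfg ihA ihC

instance (S : Set 𝒜) : ObjectProperty.ContainsZero (ExtClosure S) :=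
  ⟨⟨_, isZero_zero 𝒜, .zero (isZero_zero 𝒜)⟩⟩

instance (S : Set 𝒜) : ObjectProperty.IsClosedUnderExtensions (ExtClosure S) :=
  ⟨fun hS h₁ h₃ => .ext _ _ ⟨_, hS⟩ h₁ h₃⟩

lemma isClosedUnderQuotients {S : Set 𝒜}
    (hS : ∀ A ∈ S, ∀ A' : 𝒜, IsQuotient A A' → ExtClosure S A') :
    ObjectProperty.IsClosedUnderQuotients (ExtClosure S) := by
  suffices ∀ {B : 𝒜}, ExtClosure S B → ∀ B', IsQuotient B B' → ExtClosure S B' from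
    ⟨fun e _ hX => this hX _ ⟨e, inferInstance⟩⟩
  intro B hB
  induction hB with
  | of hE => exact hS _ hE
  | zero hE => exact fun _ ⟨e, _⟩ => .zero (hE.of_epi e)
  | ext f g hfg _ _ ihA ihC =>
    rintro B' ⟨e, _⟩
    obtain ⟨A', C', f', g', hfg', hA', hC'⟩ := hfg.exists_of_epi e
    exact .ext f' g' hfg' (ihA A' hA') (ihC C' hC')

end ExtClosure

/-- The Hom-vanishing kills the torsion-free part of any quotient of an object of `T`. -/
lemma IsTorsionClass.extClosure_of_isQuotient {T : Set 𝒜} (hT : IsTorsionClass T)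
    {E E' : 𝒜} (hE : E ∈ T) (hq : IsQuotient E E') : ExtClosure T E' := by
  obtain ⟨F, hTF, hdec⟩ := hT
  obtain ⟨e, _⟩ := hq
  obtain ⟨A, C, f, g, hA, hC, hfg⟩ := hdec E'
  have : Epi g := hfg.2.epi_g
  exact .ext f g hfg (.of hA) (.zero (IsZero.of_epi_eq_zero (e ≫ g) (hTF hE hC _)))

section Noetherian

variable (P : ObjectProperty 𝒜) [P.IsClosedUnderQuotients] [P.IsClosedUnderExtensions]

/-- The pullback of `E ⟶ E / S` along `f` is an extension of `W` by `S`; its image in `E`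
contains `S` and lies in `P`, so by maximality it is `S`, which forces `f = 0`. -/
lemma hom_cokernel_eq_zero_of_maximal {E : 𝒜} {S : Subobject E} (hS : P S)
    (hmax : ∀ S' : Subobject E, P S' → S ≤ S' → S' ≤ S) {W : 𝒜} (hW : P W)
    (f : W ⟶ cokernel S.arrow) : f = 0 := by
  set c := cokernel.π S.arrow
  have sq : IsPullback (pullback.snd c f) (pullback.fst c f) f c :=
    (IsPullback.of_hasPullback c f).flip
  have : IsIso (kernel.map _ _ _ _ sq.w) := isIso_kernel_map_of_isPullback sq
  have eS : (S : 𝒜) ≅ kernel c :=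
    (shortExact_cokernel_of_mono S.arrow).fIsKernel.conePointUniqueUpToIso (limit.isLimit _)
  have hK : P (kernel (pullback.snd c f)) :=
    P.prop_of_iso (eS ≪≫ (asIso (kernel.map _ _ _ _ sq.w)).symm) hS
  have hQ : P (pullback c f) :=
    P.prop_X₂_of_shortExact (shortExact_kernel_of_epi (pullback.snd c f)) hK hW
  have hI : P (imageSubobject (pullback.fst c f)) :=
    P.prop_of_epi (factorThruImageSubobject _) hQ
  have hle : S ≤ imageSubobject (pullback.fst c f) :=
    Subobject.le_of_comm (pullback.lift S.arrow 0 (by simp [c]) ≫ factorThruImageSubobject _)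
      (by rw [Category.assoc, imageSubobject_arrow_comp, pullback.lift_fst])
  have hfst : pullback.fst c f ≫ c = 0 := by
    rw [← imageSubobject_arrow_comp (pullback.fst c f), ← Subobject.ofLE_arrow (hmax _ hI hle)]
    simp only [Category.assoc, c, cokernel.condition, comp_zero]
  rw [← cancel_epi (pullback.snd c f), comp_zero, ← pullback.condition, hfst]

theorem isTorsionClass_of_wellFoundedGT [P.ContainsZero]
    (noeth : ∀ E : 𝒜, WellFoundedGT (Subobject E)) : IsTorsionClass P := by
  refine ⟨{B | ∀ ⦃W : 𝒜⦄, P W → ∀ f : W ⟶ B, f = 0}, fun _ hA _ hB f => hB hA f,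
    fun E => ?_⟩
  obtain ⟨S, hS, hmax⟩ := (noeth E).wf.has_min {S : Subobject E | P S}
    ⟨⊥, P.prop_of_isZero ((isZero_zero 𝒜).of_iso Subobject.botCoeIsoZero)⟩
  have hmax' : ∀ S' : Subobject E, P S' → S ≤ S' → S' ≤ S := fun S' hS' hle =>
    (hle.lt_or_eq.resolve_left (hmax S' hS')).ge
  exact ⟨S, cokernel S.arrow, S.arrow, cokernel.π S.arrow, hS,
    fun _ hW f => hom_cokernel_eq_zero_of_maximal P hS hmax' hW f,
    ⟨_, shortExact_cokernel_of_mono S.arrow⟩⟩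

end Noetherian

/-- Lemma 4.12.  Let `T, C` be full subcategories of
`Coh(X)` (a noetherian abelian category), with `T` a torsion class.  If every
quotient (in `Coh(X)`) of every object of `C` lies in the extension closure
`⟨T, C⟩`, then `⟨T, C⟩` is a torsion class in `Coh(X)`. -/
theorem ext_closure_torsion_class {𝒜 : Type u} [Category.{v} 𝒜] [Abelian 𝒜]
    (noeth : ∀ E : 𝒜, WellFoundedGT (Subobject E))
    (T C : Set 𝒜) (hT : IsTorsionClass T)
    (h : ∀ A ∈ C, ∀ A' : 𝒜, IsQuotient A A' → ExtClosure (T ∪ C) A') :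
    IsTorsionClass (ExtClosure (T ∪ C)) := by
  have hquot : ∀ A ∈ T ∪ C, ∀ A' : 𝒜, IsQuotient A A' → ExtClosure (T ∪ C) A' := by
    rintro A (hA | hA) A' hq
    · exact ExtClosure.mono Set.subset_union_left _ (hT.extClosure_of_isQuotient hA hq)
    · exact h A hA A' hq
  have := ExtClosure.isClosedUnderQuotients hquot
  exact isTorsionClass_of_wellFoundedGT _ noeth

end EllipticFramework
end
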